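/- Let L be the three-dimensional Lie algebra with basis h, y, z over a field k, with brackets [h,y] = 2y, [h,z] = 0, [y,z] = 0, and λ ∈ k. For any α₁ ≠ 0 and β₁, γ₁, γ₃ ∈ k, the linear map R defined by R(h) = α₁h + β₁y + γ₁z, R(y) = −λy, R(z) = γ₃z is a Rota–Baxter operator of weight λ on L. -/

import Mathlib

/-!
The Rota–Baxter defect `⁅R a, R c⁆ - R (⁅R a, c⁆ + ⁅a, R c⁆ + λ ⁅a, c⁆)` is bilinear and
antisymmetric in `(a, c)`, so it vanishes as soon as it vanishes on the basis pairs
`(h, y)`, `(h, z)`, `(y, z)`. The last two are trivial because `z` is central and `R z ∈ k z`;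
on `(h, y)` both sides equal `-2λα₁ y`.
-/

section

variable {k L : Type*} [Field k] [LieRing L] [LieAlgebra k L]

def IsRotaBaxter (lam : k) (R : L →ₗ[k] L) : Prop :=
  ∀ a c : L, ⁅R a, R c⁆ = R (⁅R a, c⁆ + ⁅a, R c⁆ + lam • ⁅a, c⁆)

def rotaBaxterDefect (lam : k) (R : L →ₗ[k] L) : L →ₗ[k] L →ₗ[k] L :=
  LinearMap.mk₂ k (fun a c => ⁅R a, R c⁆ - R (⁅R a, c⁆ + ⁅a, R c⁆ + lam • ⁅a, c⁆))
    (fun a a' c => by simp only [map_add, add_lie, smul_add]; abel)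
    (fun t a c => by simp only [map_smul, smul_lie, smul_comm lam t, ← smul_add, smul_sub])
    (fun a c c' => by simp only [map_add, lie_add, smul_add]; abel)
    (fun t a c => by simp only [map_smul, lie_smul, smul_comm lam t, ← smul_add, smul_sub])

variable {lam : k} {R : L →ₗ[k] L}

theorem rotaBaxterDefect_apply (a c : L) :
    rotaBaxterDefect lam R a c = ⁅R a, R c⁆ - R (⁅R a, c⁆ + ⁅a, R c⁆ + lam • ⁅a, c⁆) :=
  rfl

theorem rotaBaxterDefect_swap (a c : L) :
    rotaBaxterDefect lam R c a = -rotaBaxterDefect lam R a c := by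
  simp only [rotaBaxterDefect_apply, ← lie_skew c, ← lie_skew (R c), smul_neg, map_add,
    map_neg, map_smul]
  abel

theorem rotaBaxterDefect_self (a : L) : rotaBaxterDefect lam R a a = 0 := by
  rw [rotaBaxterDefect_apply, lie_self, lie_self, smul_zero, add_zero, ← lie_skew a (R a),
    add_neg_cancel, map_zero, sub_zero]

theorem isRotaBaxter_iff_rotaBaxterDefect_eq_zero :
    IsRotaBaxter lam R ↔ rotaBaxterDefect lam R = 0 := by
  simp only [IsRotaBaxter, LinearMap.ext_iff₂, rotaBaxterDefect_apply, LinearMap.zero_apply,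
    sub_eq_zero]

theorem IsRotaBaxter.of_basis {ι : Type*} [LinearOrder ι]
    (b : Module.Basis ι k L)
    (h : ∀ i j, i < j →
      ⁅R (b i), R (b j)⁆ = R (⁅R (b i), b j⁆ + ⁅b i, R (b j)⁆ + lam • ⁅b i, b j⁆)) :
    IsRotaBaxter lam R := by
  have basis_pair (i j : ι) (hij : i < j) : rotaBaxterDefect lam R (b i) (b j) = 0 := by
    rw [rotaBaxterDefect_apply, h i j hij, sub_self]
  rw [isRotaBaxter_iff_rotaBaxterDefect_eq_zero]
  refine LinearMap.ext_basis b b fun i j => ?_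
  rw [LinearMap.zero_apply, LinearMap.zero_apply]
  rcases lt_trichotomy i j with hij | rfl | hji
  · exact basis_pair i j hij
  · exact rotaBaxterDefect_self _
  · rw [rotaBaxterDefect_swap, basis_pair j i hji, neg_zero]

end

theorem RB_case_2_4_general {k : Type*} [Field k]
    {L : Type*} [LieRing L] [LieAlgebra k L] (b : Module.Basis (Fin 3) k L)
    (hhy : ⁅b 0, b 1⁆ = (2 : k) • b 1) (hhz : ⁅b 0, b 2⁆ = 0)
    (hyz : ⁅b 1, b 2⁆ = 0)
    (lam α₁ β₁ γ₁ γ₃ : k) (R : L →ₗ[k] L)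
    (hRh : R (b 0) = α₁ • b 0 + β₁ • b 1 + γ₁ • b 2)
    (hRy : R (b 1) = -(lam • b 1)) (hRz : R (b 2) = γ₃ • b 2) :
    ∀ a c : L, ⁅R a, R c⁆ = R (⁅R a, c⁆ + ⁅a, R c⁆ + lam • ⁅a, c⁆) := by
  have hzy : ⁅b 2, b 1⁆ = 0 := by rw [← lie_skew, hyz, neg_zero]
  refine IsRotaBaxter.of_basis b fun i j hij => ?_
  fin_cases i <;> fin_cases j <;> simp only [Fin.reduceFinMk, Fin.reduceLT] at hij <;>
    simp only [Fin.zero_eta, Fin.mk_one, Fin.reduceFinMk, Fin.isValue]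
  · simp only [hRh, hRy, hhy, hzy, add_lie, lie_neg, lie_smul, smul_lie, lie_self, map_add,
      map_neg, map_smul, map_zero]
    module
  · simp only [hRh, hRz, hhz, hyz, add_lie, lie_smul, smul_lie, lie_self, smul_zero, add_zero,
      map_zero]
  · simp only [hRy, hRz, hyz, neg_lie, lie_smul, smul_lie, smul_zero, neg_zero, add_zero, map_zero]

/-- Case 2.4: on the Lie algebra with basis `h, y, z`, `[h,y] = 2y`,
`[h,z] = [y,z] = 0`, the operator `R(h) = α₁h + β₁y + γ₁z`, `R(y) = -λy`,
`R(z) = γ₃z` with `α₁ ≠ 0` is a Rota–Baxter operator of weight `lam`. -/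
theorem RB_case_2_4 {k : Type*} [Field k]
    {L : Type*} [LieRing L] [LieAlgebra k L] (b : Module.Basis (Fin 3) k L)
    (hhy : ⁅b 0, b 1⁆ = (2 : k) • b 1) (hhz : ⁅b 0, b 2⁆ = 0)
    (hyz : ⁅b 1, b 2⁆ = 0)
    (lam α₁ β₁ γ₁ γ₃ : k) (hα₁ : α₁ ≠ 0) (R : L →ₗ[k] L)
    (hRh : R (b 0) = α₁ • b 0 + β₁ • b 1 + γ₁ • b 2)
    (hRy : R (b 1) = -(lam • b 1)) (hRz : R (b 2) = γ₃ • b 2) :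
    ∀ a c : L, ⁅R a, R c⁆ = R (⁅R a, c⁆ + ⁅a, R c⁆ + lam • ⁅a, c⁆) :=
  RB_case_2_4_general b hhy hhz hyz lam α₁ β₁ γ₁ γ₃ R hRh hRy hRz
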